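/- Let v = (n/√2)·(−1,1) + n·(0,1) + (−1,0) ∈ ℝ² and N' = v/‖v‖ for an integer n ≥ 1. Define E₂ = n·‖(−1,1)/√2 − N'‖² + n·‖(0,1) − N'‖² + ‖(−1,0) − N'‖². Then for n = 100, E₂ > E₁ where E₁ = −2(√(n²+1) − n − 1); in particular the Lloyd-type iteration of variational shape approximation can strictly increase the energy from one iteration to the next. -/
import Mathlib

noncomputable def vec2 (a b : ℝ) : EuclideanSpace ℝ (Fin 2) :=
  (WithLp.equiv 2 (Fin 2 → ℝ)).symm ![a, b]

lemma vec2_smul (r a b : ℝ) : r • vec2 a b = vec2 (r*a) (r*b) := by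
  ext i; fin_cases i <;> simp [vec2]

lemma vec2_add (a b c d : ℝ) : vec2 a b + vec2 c d = vec2 (a+c) (b+d) := by
  ext i; fin_cases i <;> simp [vec2]

lemma vec2_sub (a b c d : ℝ) : vec2 a b - vec2 c d = vec2 (a-c) (b-d) := by
  ext i; fin_cases i <;> simp [vec2]

lemma norm_vec2_sq (a b : ℝ) : ‖vec2 a b‖^2 = a^2 + b^2 := by
  rw [EuclideanSpace.norm_eq, Real.sq_sqrt (by positivity)]
  simp [vec2, Fin.sum_univ_two, sq_abs]

lemma final_ineq (s2 q r : ℝ) (hs2 : s2^2 = 2) (hq : q^2 = 10001)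
    (hr2 : r^2 = 20001 + 10100*s2) (hq0 : 0 < q) (hs0 : 0 < s2) (hr0 : 0 < r) :
    402 - 2*r > -2*(q - 100 - 1) := by
  have h1 : 2*q > 101*s2 := by nlinarith
  have h2 : (q+100)^2 > r^2 := by nlinarith
  have h3 : r < q + 100 := by nlinarith
  linarith

set_option maxHeartbeats 1000000 in
/-- In the explicit counterexample with `n = 100`, letting
`v = (n/√2)·(−1,1) + n·(0,1) + (−1,0)` and `N' = v/‖v‖`, the energy after the second
flood and proxy update, `E₂ = n‖(−1,1)/√2 − N'‖² + n‖(0,1) − N'‖² + ‖(−1,0) − N'‖²`,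
strictly exceeds the energy `E₁ = −2(√(n²+1) − n − 1)` after the first flood and
proxy update: the Lloyd-type VSA iteration can strictly increase the energy. -/
theorem vsa_example_energy_increases (n : ℕ) (hn : n = 100)
    (v N' : EuclideanSpace ℝ (Fin 2))
    (hv : v = ((n : ℝ) / Real.sqrt 2) • vec2 (-1) 1 + (n : ℝ) • vec2 0 1 + vec2 (-1) 0)
    (hN' : N' = ‖v‖⁻¹ • v)
    (E₁ E₂ : ℝ)
    (hE₁ : E₁ = -2 * (Real.sqrt ((n : ℝ) ^ 2 + 1) - n - 1))
    (hE₂ : E₂ = (n : ℝ) * ‖(Real.sqrt 2)⁻¹ • vec2 (-1) 1 - N'‖ ^ 2 +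
      (n : ℝ) * ‖vec2 0 1 - N'‖ ^ 2 + ‖vec2 (-1) 0 - N'‖ ^ 2) :
    E₂ > E₁ := by
  subst hn hv hN' hE₁ hE₂
  set s2 := Real.sqrt 2 with hs2def
  have hs2 : s2 ^ 2 = 2 := Real.sq_sqrt (by norm_num)
  have hs2pos : 0 < s2 := Real.sqrt_pos.mpr (by norm_num)
  have hs2ne : s2 ≠ 0 := ne_of_gt hs2pos
  set q := Real.sqrt ((100 : ℕ) ^ 2 + 1 : ℝ) with hqdef
  have hq : q ^ 2 = 10001 := by
    rw [hqdef]; rw [Real.sq_sqrt (by positivity)]; norm_num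
  have hqpos : 0 < q := Real.sqrt_pos.mpr (by norm_num)
  rw [show ((100:ℕ):ℝ) = 100 by norm_num]
  simp only [vec2_smul, vec2_add]
  set v1 : ℝ := 100 / s2 * -1 + 100 * 0 + -1 with hv1
  set v2 : ℝ := 100 / s2 * 1 + 100 * 1 + 0 with hv2
  set r := ‖vec2 v1 v2‖ with hrdef
  have hr2 : r ^ 2 = 20001 + 10100 * s2 := by
    rw [hrdef, norm_vec2_sq, hv1, hv2]
    field_simp
    ring_nf
    nlinarith [hs2]
  have hrpos : 0 < r := by
    have := norm_nonneg (vec2 v1 v2)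
    nlinarith [hs2pos]
  have hrne : r ≠ 0 := ne_of_gt hrpos
  simp only [vec2_smul, vec2_sub, norm_vec2_sq]
  have h100 : (100:ℝ)/s2 = 50*s2 := by
    field_simp; linear_combination -50*hs2
  have ht : s2⁻¹ = s2/2 := by
    field_simp; linear_combination -hs2
  have hv1' : v1 = -50*s2 - 1 := by rw [hv1, h100]; ring
  have hv2' : v2 = 50*s2 + 100 := by rw [hv2, h100]; ring
  rw [hv1', hv2', ht]
  set u := r⁻¹ with hudef
  have hu : u * r = 1 := inv_mul_cancel₀ hrne
  have key : 100 * ((s2 / 2 * -1 - u * (-50 * s2 - 1)) ^ 2 + (s2 / 2 * 1 - u * (50 * s2 + 100)) ^ 2) +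
        100 * ((0 - u * (-50 * s2 - 1)) ^ 2 + (1 - u * (50 * s2 + 100)) ^ 2) +
      ((-1 - u * (-50 * s2 - 1)) ^ 2 + (0 - u * (50 * s2 + 100)) ^ 2) = 402 - 2 * r := by
    linear_combination (50 + 1005000*u^2 - 10000*u) * hs2 + (2*u - 201*u^2) * hr2 +
      (201*u*r + 201 - 2*r) * hu
  rw [key]
  exact final_ineq s2 q r hs2 hq hr2 hqpos hs2pos hrpos
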